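/- Let G be a digraph with a global sink, and let τ₀, τ₁, …, τₙ be a sequence of chip-and-rotor states on G, each of which is a successor of the one before. If τ₀, τ'₁, …, τ'ₘ is another such sequence and τₙ is stable, then m ≤ n. If in addition τ'ₘ is stable, then m = n, τₙ = τ'ₙ, and for each vertex w the number of times w fires is the same in both histories. -/

import Mathlib

/-!
Abelian property of the rotor-router model (Holroyd et al., Lemma 3.9): on a digraph
with a global sink, any two complete legal firing histories of chip-and-rotor states
agree in length, final state, and firing counts.
-/

/-- The vertices other than the (global) sink `s`; these are the non-sink vertices. -/
abbrev Vne {V : Type} (s : V) : Type := {v : V // v ≠ s}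

/-- Rotor configurations on the non-sink vertices. -/
abbrev RotorConfig {V E : Type} (tail : E → V) (s : V) : Type :=
  {ρ : Vne s → E // ∀ v, tail (ρ v) = v.1}

/-- A chip-and-rotor state: a chip configuration together with a rotor configuration. -/
abbrev CRState {V E : Type} (tail : E → V) (s : V) : Type :=
  (Vne s → ℕ) × RotorConfig tail s

/-- Firing the non-sink vertex `v` in a chip-and-rotor state: the rotor at `v` is
advanced to the next edge in the cyclic ordering of outgoing edges at `v`, and one
chip moves from `v` to the head of that edge (disappearing if the head is the sink). -/
def crFire {V E : Type} [DecidableEq V] {s : V} (tail head : E → V) (next : E → E)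
    (hnext : ∀ e, tail (next e) = tail e)
    (τ : CRState tail s) (v : Vne s) : CRState tail s :=
  (fun u => (τ.1 u - if u = v then 1 else 0) +
      if u.1 = head (next (τ.2.1 v)) then 1 else 0,
   ⟨Function.update τ.2.1 v (next (τ.2.1 v)), by
      intro u
      rcases eq_or_ne u v with h | h
      · rw [h, Function.update_self, hnext]
        exact τ.2.2 v
      · rw [Function.update_of_ne h]
        exact τ.2.2 u⟩)

/-- A non-sink vertex is active in a chip-and-rotor state when it holds a chip. -/
def crActive {V E : Type} {s : V} (tail : E → V) (τ : CRState tail s) (v : Vne s) : Prop :=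
  1 ≤ τ.1 v

/-- The result of firing the vertices in the list `l` in order. -/
def crFireList {V E : Type} [DecidableEq V] {s : V} (tail head : E → V) (next : E → E)
    (hnext : ∀ e, tail (next e) = tail e)
    (τ : CRState tail s) : List (Vne s) → CRState tail s
  | [] => τ
  | v :: l => crFireList tail head next hnext (crFire tail head next hnext τ v) l

/-- The firing sequence `l` is legal from `τ`: each fired vertex is active when fired,
so each state is a successor of the previous one. -/
def crLegal {V E : Type} [DecidableEq V] {s : V} (tail head : E → V) (next : E → E)
    (hnext : ∀ e, tail (next e) = tail e)
    (τ : CRState tail s) : List (Vne s) → Prop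
  | [] => True
  | v :: l => crActive tail τ v ∧ crLegal tail head next hnext (crFire tail head next hnext τ v) l

/-- A chip-and-rotor state is stable when no vertex can fire: all chips have reached
the sink and disappeared. -/
def crStable {V E : Type} {s : V} (tail : E → V) (τ : CRState tail s) : Prop :=
  ∀ v : Vne s, τ.1 v = 0

/-!
Firing two distinct active vertices in either order gives the same state, and firing other
vertices never makes an active vertex inactive. So if a legal history fires `v` first, `v` must
occur in every history that stabilizes, and its first occurrence there can be moved to the front.
By induction every legal history is, as a multiset, contained in every stabilizing one; two
stabilizing histories are therefore permutations of each other. They end with no chips, and the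
final rotor at `u` is the initial one advanced once per firing of `u`.
-/

section RotorRouting

variable {V E : Type} [DecidableEq V] {s : V}
variable (tail head : E → V) (next : E → E) (hnext : ∀ e, tail (next e) = tail e)

theorem crFire_fst_le_of_ne (τ : CRState tail s) {u v : Vne s} (h : v ≠ u) :
    τ.1 v ≤ (crFire tail head next hnext τ u).1 v := by
  simp only [crFire, if_neg h]
  omega

theorem crFire_comm (τ : CRState tail s) {u v : Vne s} (huv : u ≠ v)
    (hu : crActive tail τ u) (hv : crActive tail τ v) :
    crFire tail head next hnext (crFire tail head next hnext τ u) v =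
      crFire tail head next hnext (crFire tail head next hnext τ v) u := by
  unfold crActive at hu hv
  refine Prod.ext (funext fun w => ?_) (Subtype.ext ?_)
  · simp only [crFire, Function.update_of_ne huv.symm, Function.update_of_ne huv]
    rcases eq_or_ne w u with rfl | hwu
    · simp only [if_neg huv]
      split_ifs <;> omega
    rcases eq_or_ne w v with rfl | hwv
    · simp only [if_neg huv.symm]
      split_ifs <;> omega
    · simp only [if_neg hwu, if_neg hwv]
      split_ifs <;> omega
  · simp only [crFire, Function.update_of_ne huv.symm, Function.update_of_ne huv]
    exact Function.update_comm huv _ _ _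

theorem crActive_crFireList_of_not_mem {τ : CRState tail s} {l : List (Vne s)} {v : Vne s}
    (hv : crActive tail τ v) (hl : crLegal tail head next hnext τ l) (hvl : v ∉ l) :
    crActive tail (crFireList tail head next hnext τ l) v := by
  induction l generalizing τ with
  | nil => exact hv
  | cons u l ih =>
    rw [List.mem_cons, not_or] at hvl
    exact ih (hv.trans (crFire_fst_le_of_ne tail head next hnext τ hvl.1)) hl.2 hvl.2

theorem crLegal_cons_append {τ : CRState tail s} {v : Vne s} {a b : List (Vne s)}
    (hv : crActive tail τ v) (hva : v ∉ a) (hl : crLegal tail head next hnext τ (a ++ v :: b)) :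
    crLegal tail head next hnext τ (v :: (a ++ b)) ∧
      crFireList tail head next hnext τ (v :: (a ++ b)) =
        crFireList tail head next hnext τ (a ++ v :: b) := by
  induction a generalizing τ with
  | nil => exact ⟨hl, rfl⟩
  | cons u a ih =>
    obtain ⟨hu, hl⟩ := hl
    rw [List.mem_cons, not_or] at hva
    obtain ⟨hlegal, hfire⟩ :=
      ih (hv.trans (crFire_fst_le_of_ne tail head next hnext τ hva.1)) hva.2 hl
    have hcomm := crFire_comm tail head next hnext τ (Ne.symm hva.1) hu hv
    refine ⟨⟨hv, hu.trans (crFire_fst_le_of_ne tail head next hnext τ (Ne.symm hva.1)), ?_⟩, ?_⟩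
    · exact hcomm ▸ hlegal.2
    · change crFireList tail head next hnext (crFire tail head next hnext _ u) (a ++ b) = _
      rw [← hcomm]
      exact hfire

theorem crLegal.subperm_of_crStable {τ : CRState tail s} {l l' : List (Vne s)}
    (hl : crLegal tail head next hnext τ l)
    (hstable : crStable tail (crFireList tail head next hnext τ l))
    (hl' : crLegal tail head next hnext τ l') : l'.Subperm l := by
  induction l' generalizing τ l with
  | nil => exact List.nil_subperm
  | cons v l' ih =>
    obtain ⟨hv, hl'⟩ := hl'
    have hvl : v ∈ l := by
      by_contra hvl
      have := crActive_crFireList_of_not_mem tail head next hnext hv hl hvl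
      exact absurd (hstable v) (Nat.one_le_iff_ne_zero.1 this)
    obtain ⟨a, b, rfl, hva⟩ := List.eq_append_cons_of_mem hvl
    obtain ⟨hlegal, hfire⟩ := crLegal_cons_append tail head next hnext hv hva hl
    have hstable' : crStable tail
        (crFireList tail head next hnext (crFire tail head next hnext τ v) (a ++ b)) := by
      rwa [← crFireList, hfire]
    exact ((List.subperm_cons v).2 (ih hlegal.2 hstable' hl')).trans List.perm_middle.symm.subperm

theorem crFireList_rotor (τ : CRState tail s) (l : List (Vne s)) (u : Vne s) :
    (crFireList tail head next hnext τ l).2.1 u = next^[l.count u] (τ.2.1 u) := by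
  induction l generalizing τ with
  | nil => rfl
  | cons v l ih =>
    rw [crFireList, ih, List.count_cons]
    rcases eq_or_ne u v with rfl | h
    · simp [crFire, Function.iterate_succ_apply]
    · simp [crFire, Function.update_of_ne h, Subtype.coe_injective.ne h.symm]

theorem crFireList_eq_of_perm_of_crStable (τ : CRState tail s) {l l' : List (Vne s)}
    (hperm : l'.Perm l) (hstable : crStable tail (crFireList tail head next hnext τ l))
    (hstable' : crStable tail (crFireList tail head next hnext τ l')) :
    crFireList tail head next hnext τ l' = crFireList tail head next hnext τ l := by
  refine Prod.ext (funext fun w => ?_) (Subtype.ext (funext fun u => ?_))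
  · rw [hstable' w, hstable w]
  · rw [crFireList_rotor, crFireList_rotor, hperm.count_eq]

end RotorRouting

theorem rotor_routing_abelian_property_general
    {V E : Type} [DecidableEq V]
    (tail head : E → V) (next : E → E)
    (hnext : ∀ e, tail (next e) = tail e)
    (s : V)
    (τ₀ : CRState tail s)
    (l l' : List (Vne s))
    (hl : crLegal tail head next hnext τ₀ l) (hl' : crLegal tail head next hnext τ₀ l')
    (hstable : crStable tail (crFireList tail head next hnext τ₀ l)) :
    l'.length ≤ l.length ∧
      (crStable tail (crFireList tail head next hnext τ₀ l') →
        l'.length = l.length ∧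
        crFireList tail head next hnext τ₀ l' = crFireList tail head next hnext τ₀ l ∧
        ∀ v, l'.count v = l.count v) := by
  have hsub := crLegal.subperm_of_crStable tail head next hnext hl hstable hl'
  refine ⟨hsub.length_le, fun hstable' => ?_⟩
  have hperm := hsub.antisymm (crLegal.subperm_of_crStable tail head next hnext hl' hstable' hl)
  exact ⟨hperm.length_eq,
    crFireList_eq_of_perm_of_crStable tail head next hnext τ₀ hperm hstable hstable',
    hperm.count_eq⟩

/-- **Abelian property of rotor-routing.**  Let `G` be a digraph with global sink `s`.
If `l` is a legal firing sequence from the chip-and-rotor state `τ₀` ending in a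
stable state, and `l'` is any legal firing sequence from `τ₀`, then `l'` is no longer
than `l`; if moreover `l'` also ends in a stable state, then the two sequences have
the same length, the same final state, and each vertex fires the same number of times
in both histories. -/
theorem rotor_routing_abelian_property
    {V E : Type} [Fintype V] [DecidableEq V] [Fintype E]
    (tail head : E → V) (next : E → E)
    (hnext : ∀ e, tail (next e) = tail e)
    (hcyc : ∀ e e' : E, tail e = tail e' → ∃ k, next^[k] e = e')
    (s : V) (hs : ∀ e : E, tail e ≠ s)
    (hglobal : ∀ v : V,
      Relation.ReflTransGen (fun a b => ∃ e, tail e = a ∧ head e = b) v s)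
    (τ₀ : CRState tail s)
    (l l' : List (Vne s))
    (hl : crLegal tail head next hnext τ₀ l) (hl' : crLegal tail head next hnext τ₀ l')
    (hstable : crStable tail (crFireList tail head next hnext τ₀ l)) :
    l'.length ≤ l.length ∧
      (crStable tail (crFireList tail head next hnext τ₀ l') →
        l'.length = l.length ∧
        crFireList tail head next hnext τ₀ l' = crFireList tail head next hnext τ₀ l ∧
        ∀ v, l'.count v = l.count v) :=
  rotor_routing_abelian_property_general tail head next hnext s τ₀ l l' hl hl' hstable
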